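/- arXiv:2511.12638 — 2 statements merged into one kernel-verified Lean document; each statement's English description precedes it below -/
import Mathlib

section
/- Determinacy up to data races: in the language L, if (G, R, P) ↓ (G₁, R₁) and (G, R, P) ↓ (G₂, R₂), then either (G₁, R₁) = (G₂, R₂), or for every memory-event context X one has (X, G, R, P) ↪↓ ⊥. -/
namespace Volta

/-- Statements of the language `L` of structured-CTAs.  Constants are drawn
from a type `C`, registers from `Reg`, shared-memory addresses from `Addr`,
and thread IDs from `TID`. -/
inductive Stmt (C Reg Addr TID : Type) : Type where
  | const (r : Reg) (c : C)
  | binop (r r₁ r₂ : Reg)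
  | copy (r r' : Reg)
  | read (r : Reg) (g : Addr)
  | write (g : Addr) (r : Reg)
  | sync (I : Set TID)

/-- A thread program: a finite sequence of statements ending in `return`. -/
inductive ThreadProg (C Reg Addr TID : Type) : Type where
  | ret
  | seq (s : Stmt C Reg Addr TID) (T : ThreadProg C Reg Addr TID)

/-- A configuration: shared memory `G`, register files `R`, program `P`. -/
structure Config (Val C Reg Addr TID : Type) : Type where
  G : Addr → Val
  R : TID → Reg → Val
  P : TID → ThreadProg C Reg Addr TID

/-- Memory-event contexts: for each address, per reader the set of threads
that have not synchronized with that read, and the last writer together with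
the set of threads that have not synchronized with that write. -/
abbrev MemEvs (Addr TID : Type) : Type :=
  Addr → (TID → Set TID) × (TID × Set TID)

variable {Val C Reg Addr TID : Type}

/-- Thread `i` has synchronized with all readers as required. -/
def noRacingRd (i : TID) (rd : TID → Set TID) : Prop :=
  ∀ j, i = j ∨ i ∉ rd j

/-- Thread `i` is, or has synchronized with, the last writer as required. -/
def noRacingWr (i : TID) (wr : TID × Set TID) : Prop :=
  i = wr.1 ∨ i ∉ wr.2

open Classical in
/-- `sync I` removes `I` from the recorded unsynchronized sets belonging to
threads of `I`. -/
noncomputable def syncMem (I : Set TID) (X : MemEvs Addr TID) : MemEvs Addr TID :=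
  fun g =>
    (fun i => if i ∈ I then (X g).1 i \ I else (X g).1 i,
     if (X g).2.1 ∈ I then ((X g).2.1, (X g).2.2 \ I) else (X g).2)

/-- The initial memory-event context `X_∅`, whose recorded unsynchronized sets
are all empty (the choice of the recorded "last writer" `t₀` is arbitrary). -/
def emptyMemEvs (t₀ : TID) : MemEvs Addr TID :=
  fun _ => (fun _ => (∅ : Set TID), (t₀, (∅ : Set TID)))

section Dynamics

variable [DecidableEq Reg] [DecidableEq Addr] [DecidableEq TID]
variable (op : Val → Val → Val) (κ : C → Val)

/-- Thread-level unchecked small-step relation. -/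
inductive TStep :
    (Addr → Val) → (Reg → Val) → ThreadProg C Reg Addr TID →
    (Addr → Val) → (Reg → Val) → ThreadProg C Reg Addr TID → Prop where
  | const {G : Addr → Val} {R : Reg → Val} {r : Reg} {c : C} {T} :
      TStep G R (.seq (.const r c) T) G (Function.update R r (κ c)) T
  | binop {G : Addr → Val} {R : Reg → Val} {r r₁ r₂ : Reg} {T} :
      TStep G R (.seq (.binop r r₁ r₂) T) G (Function.update R r (op (R r₁) (R r₂))) T
  | copy {G : Addr → Val} {R : Reg → Val} {r r' : Reg} {T} :
      TStep G R (.seq (.copy r r') T) G (Function.update R r (R r')) T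
  | read {G : Addr → Val} {R : Reg → Val} {r : Reg} {g : Addr} {T} :
      TStep G R (.seq (.read r g) T) G (Function.update R r (G g)) T
  | write {G : Addr → Val} {R : Reg → Val} {g : Addr} {r : Reg} {T} :
      TStep G R (.seq (.write g r) T) (Function.update G g (R r)) R T

/-- Top-level unchecked small-step relation `→`:
rule `Schd` advances any single thread not blocked at a `sync`, and rule
`Sync`, when every thread of `I` is either at `sync I` or at `return`,
simultaneously advances all threads of `I` past their `sync`. -/
inductive Step : Config Val C Reg Addr TID → Config Val C Reg Addr TID → Prop where
  | schd {c : Config Val C Reg Addr TID} {i : TID} {G' : Addr → Val}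
      {R' : Reg → Val} {T' : ThreadProg C Reg Addr TID} :
      TStep op κ c.G (c.R i) (c.P i) G' R' T' →
      Step c ⟨G', Function.update c.R i R', Function.update c.P i T'⟩
  | sync {c : Config Val C Reg Addr TID} {I : Set TID}
      {P' : TID → ThreadProg C Reg Addr TID} :
      (∀ i ∉ I, P' i = c.P i) →
      (∀ i ∈ I, (c.P i = .ret ∧ P' i = .ret) ∨
        ∃ T, c.P i = .seq (.sync I) T ∧ P' i = T) →
      Step c ⟨c.G, c.R, P'⟩

/-- `→*`: reflexive-transitive closure of the unchecked step relation. -/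
def Steps : Config Val C Reg Addr TID → Config Val C Reg Addr TID → Prop :=
  Relation.ReflTransGen (Step op κ)

/-- Result of a checked thread-level step: a new configuration or the error `⊥`. -/
inductive CTRes (Val C Reg Addr TID : Type) : Type where
  | ok (X : MemEvs Addr TID) (G : Addr → Val) (R : Reg → Val)
      (T : ThreadProg C Reg Addr TID)
  | err

/-- Thread-level checked small-step relation `↪ᵢ`: a read by thread `i`
updates the reader entry of `i` to the set of all TIDs and requires
`noRacingWr`; a write by `i` requires both `noRacingRd` and `noRacingWr` and
sets the writer record to `(i, univ)`; a read or write whose side condition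
fails steps to the error `⊥`. -/
inductive CTStep (i : TID) :
    MemEvs Addr TID → (Addr → Val) → (Reg → Val) → ThreadProg C Reg Addr TID →
    CTRes Val C Reg Addr TID → Prop where
  | const {X : MemEvs Addr TID} {G : Addr → Val} {R : Reg → Val} {r : Reg} {c : C} {T} :
      CTStep i X G R (.seq (.const r c) T) (.ok X G (Function.update R r (κ c)) T)
  | binop {X : MemEvs Addr TID} {G : Addr → Val} {R : Reg → Val} {r r₁ r₂ : Reg} {T} :
      CTStep i X G R (.seq (.binop r r₁ r₂) T)
        (.ok X G (Function.update R r (op (R r₁) (R r₂))) T)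
  | copy {X : MemEvs Addr TID} {G : Addr → Val} {R : Reg → Val} {r r' : Reg} {T} :
      CTStep i X G R (.seq (.copy r r') T) (.ok X G (Function.update R r (R r')) T)
  | read {X : MemEvs Addr TID} {G : Addr → Val} {R : Reg → Val} {r : Reg} {g : Addr} {T}
      (hw : noRacingWr i (X g).2) :
      CTStep i X G R (.seq (.read r g) T)
        (.ok (Function.update X g (Function.update (X g).1 i (Set.univ : Set TID), (X g).2))
          G (Function.update R r (G g)) T)
  | write {X : MemEvs Addr TID} {G : Addr → Val} {R : Reg → Val} {g : Addr} {r : Reg} {T}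
      (hr : noRacingRd i (X g).1) (hw : noRacingWr i (X g).2) :
      CTStep i X G R (.seq (.write g r) T)
        (.ok (Function.update X g ((X g).1, (i, (Set.univ : Set TID))))
          (Function.update G g (R r)) R T)
  | readBad {X : MemEvs Addr TID} {G : Addr → Val} {R : Reg → Val} {r : Reg} {g : Addr} {T}
      (hw : ¬ noRacingWr i (X g).2) :
      CTStep i X G R (.seq (.read r g) T) .err
  | writeBad {X : MemEvs Addr TID} {G : Addr → Val} {R : Reg → Val} {g : Addr} {r : Reg} {T}
      (hbad : ¬ noRacingRd i (X g).1 ∨ ¬ noRacingWr i (X g).2) :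
      CTStep i X G R (.seq (.write g r) T) .err

/-- A checked configuration: a tuple `(X, G, R, P)` or the error `⊥`. -/
inductive CConfig (Val C Reg Addr TID : Type) : Type where
  | ok (X : MemEvs Addr TID) (c : Config Val C Reg Addr TID)
  | err

/-- Top-level checked small-step relation `↪`. -/
inductive CStep : CConfig Val C Reg Addr TID → CConfig Val C Reg Addr TID → Prop where
  | schd {X : MemEvs Addr TID} {c : Config Val C Reg Addr TID} {i : TID}
      {X' : MemEvs Addr TID} {G' : Addr → Val} {R' : Reg → Val}
      {T' : ThreadProg C Reg Addr TID} :
      CTStep op κ i X c.G (c.R i) (c.P i) (.ok X' G' R' T') →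
      CStep (.ok X c) (.ok X' ⟨G', Function.update c.R i R', Function.update c.P i T'⟩)
  | schdBad {X : MemEvs Addr TID} {c : Config Val C Reg Addr TID} {i : TID} :
      CTStep op κ i X c.G (c.R i) (c.P i) .err →
      CStep (.ok X c) .err
  | sync {X : MemEvs Addr TID} {c : Config Val C Reg Addr TID} {I : Set TID}
      {P' : TID → ThreadProg C Reg Addr TID} :
      (∀ i ∉ I, P' i = c.P i) →
      (∀ i ∈ I, (c.P i = .ret ∧ P' i = .ret) ∨
        ∃ T, c.P i = .seq (.sync I) T ∧ P' i = T) →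
      CStep (.ok X c) (.ok (syncMem I X) ⟨c.G, c.R, P'⟩)

/-- `↪*`: reflexive-transitive closure of the checked step relation. -/
def CSteps : CConfig Val C Reg Addr TID → CConfig Val C Reg Addr TID → Prop :=
  Relation.ReflTransGen (CStep op κ)

/-- A memory access (an unchecked `Schd` step that is a read (`w = false`)
or write (`w = true`) by thread `i` to address `g`). -/
inductive AccStep (i : TID) (g : Addr) :
    Bool → Config Val C Reg Addr TID → Config Val C Reg Addr TID → Prop where
  | read {c : Config Val C Reg Addr TID} {r : Reg} {T : ThreadProg C Reg Addr TID}
      (h : c.P i = .seq (.read r g) T) :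
      AccStep i g false c
        ⟨c.G, Function.update c.R i (Function.update (c.R i) r (c.G g)),
          Function.update c.P i T⟩
  | write {c : Config Val C Reg Addr TID} {r : Reg} {T : ThreadProg C Reg Addr TID}
      (h : c.P i = .seq (.write g r) T) :
      AccStep i g true c
        ⟨Function.update c.G g (c.R i r), c.R, Function.update c.P i T⟩

/-- `P` has a data race: there are two memory accesses by distinct threads to
the same address, at least one a write, and two unchecked traces with a common
prefix after which the first access immediately precedes the second in one
trace and vice versa in the other. -/
def HasDataRace (P : TID → ThreadProg C Reg Addr TID) : Prop :=
  ∃ (G₀ : Addr → Val) (R₀ : TID → Reg → Val)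
    (c c₁ c₁' c₂ c₂' : Config Val C Reg Addr TID)
    (i j : TID) (g : Addr) (wi wj : Bool),
    i ≠ j ∧ (wi = true ∨ wj = true) ∧
    Steps op κ ⟨G₀, R₀, P⟩ c ∧
    AccStep i g wi c c₁ ∧ AccStep j g wj c₁ c₁' ∧
    AccStep j g wj c c₂ ∧ AccStep i g wi c₂ c₂'

/-- `(G, R, P) ↓ (G', R')`: the unchecked dynamics reaches a configuration
with every thread at `return`, with final shared memory `G'` and registers `R'`. -/
def Terminates (c : Config Val C Reg Addr TID)
    (G' : Addr → Val) (R' : TID → Reg → Val) : Prop :=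
  ∃ P', Steps op κ c ⟨G', R', P'⟩ ∧ ∀ i, P' i = ThreadProg.ret

/-- `(X, G, R, P) ↪↓ (G', R')`: the checked dynamics reaches a configuration
with every thread at `return`, with final shared memory `G'` and registers `R'`. -/
def CTerminates (X : MemEvs Addr TID) (c : Config Val C Reg Addr TID)
    (G' : Addr → Val) (R' : TID → Reg → Val) : Prop :=
  ∃ X' P', CSteps op κ (.ok X c) (.ok X' ⟨G', R', P'⟩) ∧ ∀ i, P' i = ThreadProg.ret

end Dynamics

end Volta

/-!
If no configuration reachable from `(G, R, P)` has two threads about to make conflicting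
accesses to one address, the unchecked relation is locally confluent there: local steps of
distinct threads commute, a local step commutes with a barrier, and two barriers either
coincide or involve disjoint sets of live threads. As final configurations only step to
themselves, the strip argument makes the final configuration unique.

Otherwise such a racy configuration is reachable. The checked semantics follows the same
trace unless it fails earlier, and at the race the write either fails its own check or
records itself as unsynchronized with every thread, so that the other access fails.
-/

namespace Volta

open Function

variable {Val C Reg Addr TID : Type}

namespace ThreadProg

def Writes (g : Addr) (T : ThreadProg C Reg Addr TID) : Prop :=
  ∃ r T', T = .seq (.write g r) T'

def Accesses (g : Addr) (T : ThreadProg C Reg Addr TID) : Prop :=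
  (∃ r T', T = .seq (.read r g) T') ∨ T.Writes g

end ThreadProg

def Racy (c : Config Val C Reg Addr TID) : Prop :=
  ∃ i j g, i ≠ j ∧ (c.P i).Writes g ∧ (c.P j).Accesses g

def Final (c : Config Val C Reg Addr TID) : Prop :=
  ∀ i, c.P i = .ret

/-- The side conditions of the `Sync` rule for the barrier `I`, taking `P` to `P'`. -/
def SyncsTo (I : Set TID) (P P' : TID → ThreadProg C Reg Addr TID) : Prop :=
  (∀ i ∉ I, P' i = P i) ∧
    ∀ i ∈ I, (P i = .ret ∧ P' i = .ret) ∨ ∃ T, P i = .seq (.sync I) T ∧ P' i = T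

section Sync

variable {I J : Set TID} {P P' P₁ P₂ : TID → ThreadProg C Reg Addr TID} {k : TID}

theorem SyncsTo.eq_ret (h : SyncsTo I P P') (hk : P k = .ret) : P' k = .ret := by
  by_cases hkI : k ∈ I
  · rcases h.2 k hkI with ⟨-, h'⟩ | ⟨T, h', -⟩
    · exact h'
    · rw [hk] at h'; cases h'
  · rw [h.1 k hkI, hk]

theorem SyncsTo.exists_of_ne_ret (h : SyncsTo I P P') (hk : k ∈ I) (hret : P k ≠ .ret) :
    ∃ T, P k = .seq (.sync I) T ∧ P' k = T :=
  (h.2 k hk).resolve_left fun h' => hret h'.1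

theorem SyncsTo.unique (h₁ : SyncsTo I P P₁) (h₂ : SyncsTo I P P₂) : P₁ = P₂ := by
  funext k
  by_cases hret : P k = .ret
  · rw [h₁.eq_ret hret, h₂.eq_ret hret]
  by_cases hk : k ∈ I
  · obtain ⟨T₁, e₁, hk₁⟩ := h₁.exists_of_ne_ret hk hret
    obtain ⟨T₂, e₂, hk₂⟩ := h₂.exists_of_ne_ret hk hret
    rw [e₁] at e₂
    injection e₂ with _ hT
    rw [hk₁, hk₂, hT]
  · rw [h₁.1 k hk, h₂.1 k hk]

theorem SyncsTo.barrier_eq (h₁ : SyncsTo I P P₁) (h₂ : SyncsTo J P P₂) (hkI : k ∈ I)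
    (hkJ : k ∈ J) (hret : P k ≠ .ret) : I = J := by
  obtain ⟨T₁, e₁, -⟩ := h₁.exists_of_ne_ret hkI hret
  obtain ⟨T₂, e₂, -⟩ := h₂.exists_of_ne_ret hkJ hret
  rw [e₁] at e₂
  injection e₂ with e
  injection e

open Classical in
theorem SyncsTo.merge (h₁ : SyncsTo I P P₁) (h₂ : SyncsTo J P P₂)
    (hret : ∀ k ∈ I, k ∈ J → P k = .ret) :
    SyncsTo J P₁ (fun k => if k ∈ J then P₂ k else P₁ k) := by
  refine ⟨fun k hk => if_neg hk, fun k hkJ => ?_⟩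
  simp only [if_pos hkJ]
  by_cases hkI : k ∈ I
  · exact .inl ⟨h₁.eq_ret (hret k hkI hkJ), h₂.eq_ret (hret k hkI hkJ)⟩
  · rw [h₁.1 k hkI]
    exact h₂.2 k hkJ

open Classical in
theorem SyncsTo.diamond (h₁ : SyncsTo I P P₁) (h₂ : SyncsTo J P P₂) :
    P₁ = P₂ ∨ ∃ Q, SyncsTo J P₁ Q ∧ SyncsTo I P₂ Q := by
  by_cases hret : ∀ k ∈ I, k ∈ J → P k = .ret
  · refine .inr ⟨_, h₁.merge h₂ hret, ?_⟩
    convert h₂.merge h₁ (fun k hkJ hkI => hret k hkI hkJ) using 1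
    funext k
    by_cases hkI : k ∈ I <;> by_cases hkJ : k ∈ J <;> simp only [hkI, hkJ, if_true, if_false]
    · rw [h₁.eq_ret (hret k hkI hkJ), h₂.eq_ret (hret k hkI hkJ)]
    · rw [h₁.1 k hkI, h₂.1 k hkJ]
  · push Not at hret
    obtain ⟨k, hkI, hkJ, hk⟩ := hret
    obtain rfl := h₁.barrier_eq h₂ hkI hkJ hk
    exact .inl (h₁.unique h₂)

theorem SyncsTo.update [DecidableEq TID] {i : TID} (h : SyncsTo I P P') (hi : i ∉ I)
    (T : ThreadProg C Reg Addr TID) :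
    SyncsTo I (update P i T) (update P' i T) := by
  refine ⟨fun k hk => ?_, fun k hk => ?_⟩
  · rcases eq_or_ne k i with rfl | hki
    · simp
    · simp only [update_of_ne hki, h.1 k hk]
  · have hki : k ≠ i := ne_of_mem_of_not_mem hk hi
    simpa only [update_of_ne hki] using h.2 k hk

end Sync

section ThreadStep

variable [DecidableEq Reg] [DecidableEq Addr] {op : Val → Val → Val} {κ : C → Val}
  {G G₁ G₂ G' : Addr → Val} {R R₁ R₂ R' R₁' R₂' : Reg → Val}
  {T T₁ T₂ T' T₁' T₂' : ThreadProg C Reg Addr TID}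

theorem TStep.deterministic (t₁ : TStep op κ G R T G₁ R₁ T₁) (t₂ : TStep op κ G R T G₂ R₂ T₂) :
    G₁ = G₂ ∧ R₁ = R₂ ∧ T₁ = T₂ := by
  cases t₁ <;> cases t₂ <;> exact ⟨rfl, rfl, rfl⟩

theorem TStep.mem_eq_of_not_writes (t : TStep op κ G R T G' R' T') (h : ∀ g, ¬ T.Writes g) :
    G' = G := by
  cases t
  case write => exact absurd ⟨_, _, rfl⟩ (h _)
  all_goals rfl

theorem TStep.update_mem {g : Addr} (t : TStep op κ G R T G' R' T') (hg : ¬ T.Accesses g)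
    (v : Val) : TStep op κ (update G g v) R T (update G' g v) R' T' := by
  cases t with
  | const => exact .const
  | binop => exact .binop
  | copy => exact .copy
  | @read _ g' =>
    have hne : g' ≠ g := by rintro rfl; exact hg (.inl ⟨_, _, rfl⟩)
    rw [← update_of_ne hne v G]
    exact .read
  | @write g' =>
    have hne : g' ≠ g := by rintro rfl; exact hg (.inr ⟨_, _, rfl⟩)
    rw [update_comm hne]
    exact .write

theorem TStep.exists_replay_of_writes {g : Addr} (t : TStep op κ G R T G' R' T')
    (hw : T.Writes g) :
    ∃ v, G' = update G g v ∧ ∀ H, TStep op κ H R T (update H g v) R' T' := by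
  obtain ⟨r, T, rfl⟩ := hw
  cases t
  exact ⟨_, rfl, fun _ => .write⟩

theorem TStep.commute_of_writes {g : Addr} (t₁ : TStep op κ G R₁ T₁ G₁ R₁' T₁')
    (t₂ : TStep op κ G R₂ T₂ G₂ R₂' T₂') (hw : T₁.Writes g) (hg : ¬ T₂.Accesses g) :
    ∃ G₁₂, TStep op κ G₁ R₂ T₂ G₁₂ R₂' T₂' ∧ TStep op κ G₂ R₁ T₁ G₁₂ R₁' T₁' := by
  obtain ⟨v, rfl, replay⟩ := t₁.exists_replay_of_writes hw
  exact ⟨_, t₂.update_mem hg v, replay G₂⟩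

theorem TStep.commute (t₁ : TStep op κ G R₁ T₁ G₁ R₁' T₁')
    (t₂ : TStep op κ G R₂ T₂ G₂ R₂' T₂')
    (h₁₂ : ∀ g, T₁.Writes g → ¬ T₂.Accesses g) (h₂₁ : ∀ g, T₂.Writes g → ¬ T₁.Accesses g) :
    ∃ G₁₂, TStep op κ G₁ R₂ T₂ G₁₂ R₂' T₂' ∧ TStep op κ G₂ R₁ T₁ G₁₂ R₁' T₁' := by
  by_cases hw₁ : ∃ g, T₁.Writes g
  · obtain ⟨g, hg⟩ := hw₁
    exact t₁.commute_of_writes t₂ hg (h₁₂ g hg)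
  by_cases hw₂ : ∃ g, T₂.Writes g
  · obtain ⟨g, hg⟩ := hw₂
    obtain ⟨G₁₂, h₁, h₂⟩ := t₂.commute_of_writes t₁ hg (h₂₁ g hg)
    exact ⟨G₁₂, h₂, h₁⟩
  push Not at hw₁ hw₂
  obtain rfl := t₁.mem_eq_of_not_writes hw₁
  obtain rfl := t₂.mem_eq_of_not_writes hw₂
  exact ⟨_, t₂, t₁⟩

theorem SyncsTo.not_mem_of_tStep {i : TID} (h : SyncsTo I P P')
    (t : TStep op κ G R (P i) G' R' T') : i ∉ I := fun hi => by
  rcases h.2 i hi with ⟨e, -⟩ | ⟨T, e, -⟩ <;> rw [e] at t <;> cases t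

end ThreadStep

section Dynamics

variable [DecidableEq Reg] [DecidableEq Addr] [DecidableEq TID]
variable {op : Val → Val → Val} {κ : C → Val}

def RaceFree (op : Val → Val → Val) (κ : C → Val) (c : Config Val C Reg Addr TID) : Prop :=
  ∀ d, Steps op κ c d → ¬ Racy d

variable {X : MemEvs Addr TID} {G G' : Addr → Val} {R R' : Reg → Val}
  {T T' : ThreadProg C Reg Addr TID} {c c' c₁ c₂ f f₁ f₂ : Config Val C Reg Addr TID}

theorem CTStep.err_or_ok_of_tStep (i : TID) (X : MemEvs Addr TID)
    (t : TStep op κ G R T G' R' T') :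
    CTStep op κ i X G R T .err ∨ ∃ X', CTStep op κ i X G R T (.ok X' G' R' T') := by
  cases t with
  | const => exact .inr ⟨X, .const⟩
  | binop => exact .inr ⟨X, .binop⟩
  | copy => exact .inr ⟨X, .copy⟩
  | @read r g =>
    by_cases hw : noRacingWr i (X g).2
    · exact .inr ⟨_, .read hw⟩
    · exact .inl (.readBad hw)
  | @write g r =>
    by_cases hok : noRacingRd i (X g).1 ∧ noRacingWr i (X g).2
    · exact .inr ⟨_, .write hok.1 hok.2⟩
    · exact .inl (.writeBad (not_and_or.mp hok))

theorem CStep.err_or_ok_of_step (X : MemEvs Addr TID) (h : Step op κ c c') :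
    CStep op κ (.ok X c) .err ∨ ∃ X', CStep op κ (.ok X c) (.ok X' c') := by
  cases h with
  | schd t =>
    rcases CTStep.err_or_ok_of_tStep _ X t with h | ⟨X', h⟩
    exacts [.inl (.schdBad h), .inr ⟨X', .schd h⟩]
  | sync hout hin => exact .inr ⟨_, .sync hout hin⟩

theorem CSteps.err_or_ok_of_steps (X : MemEvs Addr TID) (h : Steps op κ c c') :
    CSteps op κ (.ok X c) .err ∨ ∃ X', CSteps op κ (.ok X c) (.ok X' c') := by
  induction h with
  | refl => exact .inr ⟨X, .refl⟩
  | tail _ hs ih =>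
    obtain herr | ⟨X₁, h₁⟩ := ih
    · exact .inl herr
    obtain herr | ⟨X₂, h₂⟩ := CStep.err_or_ok_of_step X₁ hs
    exacts [.inl (h₁.tail herr), .inr ⟨X₂, h₁.tail h₂⟩]

theorem CTStep.err_of_accesses {j : TID} {g : Addr} (hT : T.Accesses g)
    (hw : ¬ noRacingWr j (X g).2) : CTStep op κ j X G R T .err := by
  rcases hT with ⟨r, T, rfl⟩ | ⟨r, T, rfl⟩
  exacts [.readBad hw, .writeBad (.inr hw)]

theorem CSteps.err_of_racy (h : Racy c) (X : MemEvs Addr TID) :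
    CSteps op κ (.ok X c) .err := by
  obtain ⟨i, j, g, hij, ⟨r, T, hPi⟩, hj⟩ := h
  by_cases hok : noRacingRd i (X g).1 ∧ noRacingWr i (X g).2
  · have hwrite : CStep op κ (.ok X c)
        (.ok (update X g ((X g).1, (i, Set.univ)))
          ⟨update c.G g (c.R i r), update c.R i (c.R i), update c.P i T⟩) :=
      .schd (by rw [hPi]; exact .write hok.1 hok.2)
    refine .head hwrite (.single (.schdBad (i := j) (CTStep.err_of_accesses (g := g) ?_ ?_)))
    · simpa only [update_of_ne hij.symm] using hj
    · simp [noRacingWr, hij.symm]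
  · exact .single (.schdBad (i := i) (by rw [hPi]; exact .writeBad (not_and_or.mp hok)))

theorem CSteps.err_of_not_raceFree (h : ¬ RaceFree op κ c) (X : MemEvs Addr TID) :
    CSteps op κ (.ok X c) .err := by
  obtain ⟨d, hcd, hd⟩ : ∃ d, Steps op κ c d ∧ Racy d := by
    simpa [RaceFree] using h
  obtain herr | ⟨X', hok⟩ := CSteps.err_or_ok_of_steps X hcd
  exacts [herr, hok.trans (err_of_racy hd X')]

theorem Step.join_schd_schd {i j : TID} (hij : i ≠ j) {Ga Gb Gd : Addr → Val}
    {Ra Rb : Reg → Val} {Ta Tb : ThreadProg C Reg Addr TID}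
    (tj : TStep op κ Ga (c.R j) (c.P j) Gd Rb Tb) (ti : TStep op κ Gb (c.R i) (c.P i) Gd Ra Ta) :
    ∃ d, Step op κ ⟨Ga, update c.R i Ra, update c.P i Ta⟩ d ∧
      Step op κ ⟨Gb, update c.R j Rb, update c.P j Tb⟩ d := by
  refine ⟨⟨Gd, update (update c.R i Ra) j Rb, update (update c.P i Ta) j Tb⟩,
    .schd ?_, ?_⟩
  · simpa only [update_of_ne hij.symm] using tj
  · rw [update_comm hij Ra Rb c.R, update_comm hij Ta Tb c.P]
    exact .schd (by simpa only [update_of_ne hij] using ti)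

theorem Step.join_schd_sync {i : TID} {I : Set TID} {P' : TID → ThreadProg C Reg Addr TID}
    (t : TStep op κ c.G (c.R i) (c.P i) G' R' T') (h : SyncsTo I c.P P') :
    ∃ d, Step op κ ⟨G', update c.R i R', update c.P i T'⟩ d ∧ Step op κ ⟨c.G, c.R, P'⟩ d := by
  have hi := h.not_mem_of_tStep t
  have hs := h.update hi T'
  refine ⟨⟨G', update c.R i R', update P' i T'⟩, .sync hs.1 hs.2, .schd ?_⟩
  show TStep op κ c.G (c.R i) (P' i) G' R' T'
  rw [h.1 i hi]
  exact t

theorem Step.diamond (hc : ¬ Racy c) (h₁ : Step op κ c c₁) (h₂ : Step op κ c c₂) :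
    c₁ = c₂ ∨ ∃ d, Step op κ c₁ d ∧ Step op κ c₂ d := by
  cases h₁ with
  | @schd i _ _ _ t₁ =>
    cases h₂ with
    | @schd j _ _ _ t₂ =>
      rcases eq_or_ne i j with rfl | hij
      · obtain ⟨rfl, rfl, rfl⟩ := t₁.deterministic t₂
        exact .inl rfl
      obtain ⟨_, tj, ti⟩ := t₁.commute t₂ (fun g hw ha => hc ⟨i, j, g, hij, hw, ha⟩)
        (fun g hw ha => hc ⟨j, i, g, hij.symm, hw, ha⟩)
      exact .inr (join_schd_schd hij tj ti)
    | sync hout hin => exact .inr (join_schd_sync t₁ ⟨hout, hin⟩)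
  | sync hout hin =>
    cases h₂ with
    | schd t₂ =>
      obtain ⟨d, h₂, h₁⟩ := join_schd_sync t₂ ⟨hout, hin⟩
      exact .inr ⟨d, h₁, h₂⟩
    | sync hout' hin' =>
      rcases SyncsTo.diamond ⟨hout, hin⟩ ⟨hout', hin'⟩ with rfl | ⟨Q, h₁, h₂⟩
      · exact .inl rfl
      · exact .inr ⟨⟨c.G, c.R, Q⟩, .sync h₁.1 h₁.2, .sync h₂.1 h₂.2⟩

theorem Final.step_eq (hc : Final c) (h : Step op κ c c') : c' = c := by
  cases h with
  | schd t => rw [hc] at t; cases t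
  | sync hout hin =>
    congr
    funext k
    rw [hc k]
    exact SyncsTo.eq_ret ⟨hout, hin⟩ (hc k)

theorem Final.steps_eq (hc : Final c) (h : Steps op κ c c') : c' = c := by
  induction h with
  | refl => rfl
  | tail _ hs ih =>
    subst ih
    exact hc.step_eq hs

theorem RaceFree.step (hc : RaceFree op κ c) (h : Step op κ c c') : RaceFree op κ c' :=
  fun d hd => hc d (.head h hd)

theorem Steps.of_step_of_final (hc : RaceFree op κ c) (hf : Final f) (h : Steps op κ c f)
    (hs : Step op κ c c') : Steps op κ c' f := by
  induction h using Relation.ReflTransGen.head_induction_on generalizing c' with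
  | refl => rw [hf.step_eq hs]; exact .refl
  | head hcb _ ih =>
    rcases hcb.diamond (hc _ .refl) hs with rfl | ⟨d, hbd, hc'd⟩
    · assumption
    · exact .head hc'd (ih (hc.step hcb) hbd)

theorem Steps.final_unique (hc : RaceFree op κ c) (h₁ : Steps op κ c f₁) (hf₁ : Final f₁)
    (h₂ : Steps op κ c f₂) (hf₂ : Final f₂) : f₁ = f₂ := by
  induction h₂ using Relation.ReflTransGen.head_induction_on with
  | refl => exact hf₂.steps_eq h₁
  | head hcb _ ih => exact ih (hc.step hcb) (h₁.of_step_of_final hc hf₁ hcb)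

end Dynamics

/-- **Determinacy up to data races**: if `(G, R, P) ↓ (G₁, R₁)` and
`(G, R, P) ↓ (G₂, R₂)`, then either `(G₁, R₁) = (G₂, R₂)`, or for every
memory-event context `X` one has `(X, G, R, P) ↪↓ ⊥`. -/
theorem determinacy_up_to_races
    {Val C Reg Addr TID : Type} [DecidableEq Reg] [DecidableEq Addr] [DecidableEq TID]
    (op : Val → Val → Val) (κ : C → Val)
    (G : Addr → Val) (R : TID → Reg → Val) (P : TID → ThreadProg C Reg Addr TID)
    (G₁ G₂ : Addr → Val) (R₁ R₂ : TID → Reg → Val)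
    (h₁ : Terminates op κ ⟨G, R, P⟩ G₁ R₁)
    (h₂ : Terminates op κ ⟨G, R, P⟩ G₂ R₂) :
    (G₁ = G₂ ∧ R₁ = R₂) ∨
      ∀ X : MemEvs Addr TID, CSteps op κ (.ok X ⟨G, R, P⟩) .err := by
  obtain ⟨P₁, hs₁, hf₁⟩ := h₁
  obtain ⟨P₂, hs₂, hf₂⟩ := h₂
  by_cases hrf : RaceFree op κ ⟨G, R, P⟩
  · cases Steps.final_unique hrf hs₁ hf₁ hs₂ hf₂
    exact .inl ⟨rfl, rfl⟩
  · exact .inr (CSteps.err_of_not_raceFree hrf)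

end Volta
end

section
/- Soundness of Equivalence Checking: for all programs P, Q of the language L, symbolic contexts G, R over 𝕍, and maps φ : (𝕍, ⊕) → (ℝ, ⊕), if (X_∅, G, R, P) ↪↓ (G_P, R_P), (X_∅, G, R, Q) ↪↓ (G_Q, R_Q), the symbolic outputs are equal (G_P = G_Q and R_P = R_Q as symbolic terms), (φ(G), φ(R), P) ↓ (G_P', R_P'), and (φ(G), φ(R), Q) ↓ (G_Q', R_Q'), then G_P' = G_Q' and R_P' = R_Q'. -/
/-!
The checked semantics is confluent up to races. Two checked steps from one configuration either
coincide or can each be followed by one step to a common configuration, unless the first leaves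
some thread `Doomed`: its pending access now fails its race check. A failed check stays failed
under the steps of other threads and under barriers the thread is not part of, and a thread
waiting at an access takes part in no barrier, so a doomed thread never reaches `return`.
Induction along a terminating checked run then shows that every checked step from its start
leads to a configuration with a terminating run to the same memory and registers. Hence no
checked run reaches `⊥`, every unchecked run lifts to a checked one, and all terminating runs
end in that same state. Checked steps use values only through `⊕` and constants, so symbolic
checked runs map along `φ` to real ones, and equal symbolic outputs force equal real outputs.
-/

namespace Volta

section MemEvs

variable {Addr TID : Type} [DecidableEq Addr]

def recordWrite (i : TID) (g : Addr) (X : MemEvs Addr TID) : MemEvs Addr TID :=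
  Function.update X g ((X g).1, (i, Set.univ))

lemma recordWrite_apply_of_ne {g g' : Addr} (h : g' ≠ g) (i : TID) (X : MemEvs Addr TID) :
    recordWrite i g X g' = X g' :=
  Function.update_of_ne h _ _

lemma recordWrite_comm {g g' : Addr} (hg : g ≠ g') (i j : TID) (X : MemEvs Addr TID) :
    recordWrite i g (recordWrite j g' X) = recordWrite j g' (recordWrite i g X) := by
  funext a
  by_cases ha : a = g <;> by_cases ha' : a = g' <;> subst_vars <;>
    simp_all [recordWrite, Function.update_apply]

lemma syncMem_recordWrite {i : TID} {I : Set TID} (hi : i ∉ I) (g : Addr)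
    (X : MemEvs Addr TID) :
    syncMem I (recordWrite i g X) = recordWrite i g (syncMem I X) := by
  funext a
  by_cases ha : a = g
  · subst ha; simp [syncMem, recordWrite, hi]
  · simp only [syncMem, recordWrite, Function.update_of_ne ha]
    split_ifs <;> simp_all

variable [DecidableEq TID]

def recordRead (i : TID) (g : Addr) (X : MemEvs Addr TID) : MemEvs Addr TID :=
  Function.update X g (Function.update (X g).1 i Set.univ, (X g).2)

@[simp] lemma recordRead_snd (i : TID) (g g' : Addr) (X : MemEvs Addr TID) :
    (recordRead i g X g').2 = (X g').2 := by
  by_cases h : g' = g <;> simp [recordRead, h]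

lemma recordRead_apply_of_ne {g g' : Addr} (h : g' ≠ g) (i : TID) (X : MemEvs Addr TID) :
    recordRead i g X g' = X g' :=
  Function.update_of_ne h _ _

lemma recordRead_comm {i j : TID} (hij : i ≠ j) (g g' : Addr) (X : MemEvs Addr TID) :
    recordRead i g (recordRead j g' X) = recordRead j g' (recordRead i g X) := by
  funext a
  by_cases ha : a = g <;> by_cases ha' : a = g' <;> subst_vars <;>
    simp_all [recordRead, Function.update_apply, Function.update_comm hij]

lemma recordRead_recordWrite_comm {g g' : Addr} (hg : g ≠ g') (i j : TID)
    (X : MemEvs Addr TID) :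
    recordRead i g (recordWrite j g' X) = recordWrite j g' (recordRead i g X) := by
  funext a
  by_cases ha : a = g <;> by_cases ha' : a = g' <;> subst_vars <;>
    simp_all [recordRead, recordWrite, Function.update_apply]

lemma syncMem_recordRead {i : TID} {I : Set TID} (hi : i ∉ I) (g : Addr)
    (X : MemEvs Addr TID) :
    syncMem I (recordRead i g X) = recordRead i g (syncMem I X) := by
  funext a
  by_cases ha : a = g
  · subst ha
    refine Prod.ext (funext fun k => ?_) ?_
    · by_cases hk : k = i
      · subst hk; simp [syncMem, recordRead, hi]
      · simp [syncMem, recordRead, hk]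
    · simp only [syncMem, recordRead, Function.update_self]
      split_ifs <;> simp_all
  · simp only [syncMem, recordRead, Function.update_of_ne ha]
    split_ifs <;> simp_all

end MemEvs

lemma syncMem_comm {Addr TID : Type} (I J : Set TID) (X : MemEvs Addr TID) :
    syncMem I (syncMem J X) = syncMem J (syncMem I X) := by
  funext g
  refine Prod.ext (funext fun k => ?_) ?_
  · by_cases hI : k ∈ I <;> by_cases hJ : k ∈ J <;> simp [syncMem, hI, hJ, Set.sdiff_sdiff_comm]
  · by_cases hI : (X g).2.1 ∈ I <;> by_cases hJ : (X g).2.1 ∈ J <;>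
      simp [syncMem, hI, hJ, Set.sdiff_sdiff_comm]

section Races

variable {C Reg Addr TID : Type}

def Doomed (i : TID) (X : MemEvs Addr TID) : ThreadProg C Reg Addr TID → Prop
  | .seq (.read _ g) _ => ¬ noRacingWr i (X g).2
  | .seq (.write g _) _ => ¬ noRacingRd i (X g).1 ∨ ¬ noRacingWr i (X g).2
  | _ => False

lemma Doomed.ne_ret {i : TID} {X : MemEvs Addr TID} {T : ThreadProg C Reg Addr TID}
    (h : Doomed i X T) : T ≠ .ret := by
  rintro rfl; exact h

lemma Doomed.ne_sync {i : TID} {X : MemEvs Addr TID} {T : ThreadProg C Reg Addr TID}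
    (h : Doomed i X T) (I : Set TID) (T' : ThreadProg C Reg Addr TID) :
    T ≠ .seq (.sync I) T' := by
  rintro rfl; exact h

def RacesPersist (i : TID) (X X' : MemEvs Addr TID) : Prop :=
  ∀ g, (¬ noRacingRd i (X g).1 → ¬ noRacingRd i (X' g).1) ∧
    (¬ noRacingWr i (X g).2 → ¬ noRacingWr i (X' g).2)

lemma RacesPersist.refl (i : TID) (X : MemEvs Addr TID) : RacesPersist i X X :=
  fun _ => ⟨id, id⟩

lemma Doomed.of_racesPersist {i : TID} {X X' : MemEvs Addr TID}
    {T : ThreadProg C Reg Addr TID} (h : Doomed i X T) (hX : RacesPersist i X X') :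
    Doomed i X' T := by
  match T, h with
  | .seq (.read _ g) _, h => exact (hX g).2 h
  | .seq (.write g _) _, h => exact h.imp (hX g).1 (hX g).2

lemma racesPersist_syncMem {i : TID} {I : Set TID} (hi : i ∉ I) (X : MemEvs Addr TID) :
    RacesPersist i X (syncMem I X) := by
  intro g
  simp only [noRacingRd, noRacingWr, syncMem, not_forall, not_or, not_not]
  refine ⟨fun ⟨j, hij, hj⟩ => ⟨j, hij, ?_⟩, fun ⟨hw, hm⟩ => ?_⟩
  · split_ifs <;> simp [hj, hi]
  · split_ifs <;> simp [hw, hm, hi]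

lemma noRacingRd_syncMem {i : TID} {I : Set TID} {X : MemEvs Addr TID} {g : Addr}
    (h : noRacingRd i (X g).1) : noRacingRd i (syncMem I X g).1 := by
  intro j
  rcases h j with h | h
  · exact .inl h
  · refine .inr ?_
    simp only [syncMem]
    split_ifs <;> simp [h]

lemma noRacingWr_syncMem {i : TID} {I : Set TID} {X : MemEvs Addr TID} {g : Addr}
    (h : noRacingWr i (X g).2) : noRacingWr i (syncMem I X g).2 := by
  simp only [noRacingWr, syncMem] at h ⊢
  split_ifs <;> simp_all [or_iff_not_imp_left]

variable [DecidableEq Addr]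

lemma racesPersist_recordWrite {i j : TID} (hij : j ≠ i) (g : Addr) (X : MemEvs Addr TID) :
    RacesPersist i X (recordWrite j g X) := by
  intro a
  by_cases ha : a = g
  · subst ha
    simp [recordWrite, noRacingWr, hij.symm]
  · simp [recordWrite_apply_of_ne ha]

variable [DecidableEq TID]

lemma racesPersist_recordRead {i j : TID} (hij : j ≠ i) (g : Addr) (X : MemEvs Addr TID) :
    RacesPersist i X (recordRead j g X) := by
  intro a
  by_cases ha : a = g
  · subst ha
    simp only [noRacingRd, recordRead, Function.update_self, not_forall, not_or, not_not]
    refine ⟨fun ⟨k, hik, hk⟩ => ?_, id⟩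
    by_cases hkj : k = j
    · exact ⟨j, hij.symm, by simp⟩
    · exact ⟨k, hik, by simpa [hkj] using hk⟩
  · simp [recordRead_apply_of_ne ha]

end Races

section ThreadStep

variable {Val C Reg Addr TID : Type} [DecidableEq Reg] [DecidableEq Addr] [DecidableEq TID]
variable {op : Val → Val → Val} {κ : C → Val}

lemma ctstep_read {i : TID} {X : MemEvs Addr TID} {G : Addr → Val} {R : Reg → Val} {r : Reg}
    {g : Addr} {T : ThreadProg C Reg Addr TID} (hw : noRacingWr i (X g).2) :
    CTStep op κ i X G R (.seq (.read r g) T)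
      (.ok (recordRead i g X) G (Function.update R r (G g)) T) :=
  .read hw

lemma ctstep_write {i : TID} {X : MemEvs Addr TID} {G : Addr → Val} {R : Reg → Val} {r : Reg}
    {g : Addr} {T : ThreadProg C Reg Addr TID} (hr : noRacingRd i (X g).1)
    (hw : noRacingWr i (X g).2) :
    CTStep op κ i X G R (.seq (.write g r) T)
      (.ok (recordWrite i g X) (Function.update G g (R r)) R T) :=
  .write hr hw

lemma CTStep.det {i : TID} {X : MemEvs Addr TID} {G : Addr → Val} {R : Reg → Val}
    {T : ThreadProg C Reg Addr TID} {z₁ z₂ : CTRes Val C Reg Addr TID}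
    (h₁ : CTStep op κ i X G R T z₁) (h₂ : CTStep op κ i X G R T z₂) : z₁ = z₂ := by
  cases h₁ <;> cases h₂ <;> first | rfl | (exfalso; tauto)

lemma CTStep.ne_ret {i : TID} {X : MemEvs Addr TID} {G : Addr → Val} {R : Reg → Val}
    {T : ThreadProg C Reg Addr TID} {z : CTRes Val C Reg Addr TID}
    (h : CTStep op κ i X G R T z) : T ≠ .ret := by
  cases h <;> simp

lemma CTStep.ne_sync {i : TID} {X : MemEvs Addr TID} {G : Addr → Val} {R : Reg → Val}
    {T : ThreadProg C Reg Addr TID} {z : CTRes Val C Reg Addr TID}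
    (h : CTStep op κ i X G R T z) (I : Set TID) (T' : ThreadProg C Reg Addr TID) :
    T ≠ .seq (.sync I) T' := by
  cases h <;> simp

lemma ctstep_err_iff_doomed {i : TID} {X : MemEvs Addr TID} {G : Addr → Val} {R : Reg → Val}
    {T : ThreadProg C Reg Addr TID} :
    CTStep op κ i X G R T .err ↔ Doomed i X T := by
  constructor
  · rintro (_ | _) <;> assumption
  · intro h
    match T, h with
    | .seq (.read _ _) _, h => exact .readBad h
    | .seq (.write _ _) _, h => exact .writeBad h

lemma Doomed.not_ctstep_ok {i : TID} {X X' : MemEvs Addr TID} {G G' : Addr → Val}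
    {R R' : Reg → Val} {T T' : ThreadProg C Reg Addr TID} (hd : Doomed i X T) :
    ¬ CTStep op κ i X G R T (.ok X' G' R' T') :=
  fun h => nomatch h.det (ctstep_err_iff_doomed.mpr hd)

lemma CTStep.racesPersist {i j : TID} (hij : j ≠ i) {X X' : MemEvs Addr TID}
    {G G' : Addr → Val} {R R' : Reg → Val} {T T' : ThreadProg C Reg Addr TID}
    (h : CTStep op κ j X G R T (.ok X' G' R' T')) : RacesPersist i X X' := by
  cases h with
  | read => exact racesPersist_recordRead hij _ X
  | write => exact racesPersist_recordWrite hij _ X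
  | _ => exact RacesPersist.refl i X

lemma CTStep.syncMem {i : TID} {I : Set TID} (hi : i ∉ I) {X X' : MemEvs Addr TID}
    {G G' : Addr → Val} {R R' : Reg → Val} {T T' : ThreadProg C Reg Addr TID}
    (h : CTStep op κ i X G R T (.ok X' G' R' T')) :
    CTStep op κ i (syncMem I X) G R T (.ok (syncMem I X') G' R' T') := by
  cases h with
  | const => exact .const
  | binop => exact .binop
  | copy => exact .copy
  | read hw =>
    rw [← recordRead.eq_1, syncMem_recordRead hi]
    exact ctstep_read (noRacingWr_syncMem hw)
  | write hr hw =>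
    rw [← recordWrite.eq_1, syncMem_recordWrite hi]
    exact ctstep_write (noRacingRd_syncMem hr) (noRacingWr_syncMem hw)

lemma TStep.ctstep {i : TID} (X : MemEvs Addr TID) {G G' : Addr → Val} {R R' : Reg → Val}
    {T T' : ThreadProg C Reg Addr TID} (h : TStep op κ G R T G' R' T') :
    (∃ X', CTStep op κ i X G R T (.ok X' G' R' T')) ∨ CTStep op κ i X G R T .err := by
  classical
  cases h with
  | const => exact .inl ⟨_, .const⟩
  | binop => exact .inl ⟨_, .binop⟩
  | copy => exact .inl ⟨_, .copy⟩
  | read =>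
    rename_i g
    by_cases hw : noRacingWr i (X g).2
    · exact .inl ⟨_, .read hw⟩
    · exact .inr (.readBad hw)
  | write =>
    rename_i g _
    by_cases hrw : noRacingRd i (X g).1 ∧ noRacingWr i (X g).2
    · exact .inl ⟨_, .write hrw.1 hrw.2⟩
    · exact .inr (.writeBad (not_and_or.mp hrw))

lemma ctstep_diamond_read {i j : TID} (hij : i ≠ j) {X X₂ : MemEvs Addr TID}
    {G G₂ : Addr → Val} {Ri Rj Rj' : Reg → Val} {r : Reg} {g : Addr}
    {Ti Tj Tj' : ThreadProg C Reg Addr TID} (hw : noRacingWr i (X g).2)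
    (h₂ : CTStep op κ j X G Rj Tj (.ok X₂ G₂ Rj' Tj')) :
    Doomed j (recordRead i g X) Tj ∨ ∃ X₃ G₃,
      CTStep op κ j (recordRead i g X) G Rj Tj (.ok X₃ G₃ Rj' Tj') ∧
      CTStep op κ i X₂ G₂ Ri (.seq (.read r g) Ti) (.ok X₃ G₃ (Function.update Ri r (G g)) Ti) := by
  cases h₂ with
  | const => exact .inr ⟨_, _, .const, .read hw⟩
  | binop => exact .inr ⟨_, _, .binop, .read hw⟩
  | copy => exact .inr ⟨_, _, .copy, .read hw⟩
  | read hw₂ =>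
    rw [← recordRead.eq_1]
    refine .inr ⟨_, _, ctstep_read (by simpa using hw₂), ?_⟩
    rw [recordRead_comm hij.symm]
    exact ctstep_read (by simpa using hw)
  | write hr₂ hw₂ =>
    rename_i g₂ r₂
    rw [← recordWrite.eq_1]
    by_cases hg : g₂ = g
    · subst hg
      exact .inl (.inl fun h => (h i).elim hij.symm (by simp [recordRead]))
    refine .inr ⟨_, _, ctstep_write (by simpa [recordRead_apply_of_ne hg] using hr₂)
      (by simpa using hw₂), ?_⟩
    rw [← recordRead_recordWrite_comm (Ne.symm hg),
      ← Function.update_of_ne (Ne.symm hg) (Rj r₂) G]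
    exact ctstep_read (by simpa [recordWrite_apply_of_ne (Ne.symm hg)] using hw)

lemma ctstep_diamond_write {i j : TID} (hij : i ≠ j) {X X₂ : MemEvs Addr TID}
    {G G₂ : Addr → Val} {Ri Rj Rj' : Reg → Val} {r : Reg} {g : Addr}
    {Ti Tj Tj' : ThreadProg C Reg Addr TID} (hr : noRacingRd i (X g).1)
    (hw : noRacingWr i (X g).2) (h₂ : CTStep op κ j X G Rj Tj (.ok X₂ G₂ Rj' Tj')) :
    Doomed j (recordWrite i g X) Tj ∨ ∃ X₃ G₃,
      CTStep op κ j (recordWrite i g X) (Function.update G g (Ri r)) Rj Tj (.ok X₃ G₃ Rj' Tj') ∧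
      CTStep op κ i X₂ G₂ Ri (.seq (.write g r) Ti) (.ok X₃ G₃ Ri Ti) := by
  cases h₂ with
  | const => exact .inr ⟨_, _, .const, .write hr hw⟩
  | binop => exact .inr ⟨_, _, .binop, .write hr hw⟩
  | copy => exact .inr ⟨_, _, .copy, .write hr hw⟩
  | read hw₂ =>
    rename_i g₂
    rw [← recordRead.eq_1]
    by_cases hg : g₂ = g
    · subst hg
      exact .inl (by simp [Doomed, recordWrite, noRacingWr, hij.symm])
    rw [← Function.update_of_ne hg (Ri r) G]
    refine .inr ⟨_, _, ctstep_read (by simpa [recordWrite_apply_of_ne hg] using hw₂), ?_⟩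
    rw [recordRead_recordWrite_comm hg]
    exact ctstep_write (by simpa [recordRead_apply_of_ne (Ne.symm hg)] using hr)
      (by simpa using hw)
  | write hr₂ hw₂ =>
    rename_i g₂ _
    rw [← recordWrite.eq_1]
    by_cases hg : g₂ = g
    · subst hg
      exact .inl (.inr (by simp [recordWrite, noRacingWr, hij.symm]))
    refine .inr ⟨_, _, ctstep_write (by simpa [recordWrite_apply_of_ne hg] using hr₂)
      (by simpa [recordWrite_apply_of_ne hg] using hw₂), ?_⟩
    rw [recordWrite_comm hg, Function.update_comm (Ne.symm hg)]
    exact ctstep_write (by simpa [recordWrite_apply_of_ne (Ne.symm hg)] using hr)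
      (by simpa [recordWrite_apply_of_ne (Ne.symm hg)] using hw)

lemma ctstep_diamond {i j : TID} (hij : i ≠ j) {X X₁ X₂ : MemEvs Addr TID}
    {G G₁ G₂ : Addr → Val} {Ri Ri' Rj Rj' : Reg → Val}
    {Ti Ti' Tj Tj' : ThreadProg C Reg Addr TID}
    (h₁ : CTStep op κ i X G Ri Ti (.ok X₁ G₁ Ri' Ti'))
    (h₂ : CTStep op κ j X G Rj Tj (.ok X₂ G₂ Rj' Tj')) :
    Doomed j X₁ Tj ∨ ∃ X₃ G₃, CTStep op κ j X₁ G₁ Rj Tj (.ok X₃ G₃ Rj' Tj') ∧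
      CTStep op κ i X₂ G₂ Ri Ti (.ok X₃ G₃ Ri' Ti') := by
  cases h₁ with
  | const => exact .inr ⟨_, _, h₂, .const⟩
  | binop => exact .inr ⟨_, _, h₂, .binop⟩
  | copy => exact .inr ⟨_, _, h₂, .copy⟩
  | read hw => exact ctstep_diamond_read hij hw h₂
  | write hr hw => exact ctstep_diamond_write hij hr hw h₂

end ThreadStep

section Barriers

variable {C Reg Addr TID : Type}

def SyncUpdate (I : Set TID) (P P' : TID → ThreadProg C Reg Addr TID) : Prop :=
  (∀ i ∉ I, P' i = P i) ∧
    ∀ i ∈ I, (P i = .ret ∧ P' i = .ret) ∨ ∃ T, P i = .seq (.sync I) T ∧ P' i = T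

namespace SyncUpdate

variable {I J : Set TID} {P P₁ P₂ : TID → ThreadProg C Reg Addr TID}

lemma not_mem (hs : SyncUpdate I P P₁) {i : TID} (hret : P i ≠ .ret)
    (hsync : ∀ T, P i ≠ .seq (.sync I) T) : i ∉ I := fun hi => by
  rcases hs.2 i hi with ⟨h, -⟩ | ⟨T, h, -⟩
  exacts [hret h, hsync T h]

lemma det (h₁ : SyncUpdate I P P₁) (h₂ : SyncUpdate I P P₂) : P₁ = P₂ := by
  funext i
  by_cases hi : i ∈ I
  · rcases h₁.2 i hi with ⟨h, h'⟩ | ⟨T, h, h'⟩ <;>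
      rcases h₂.2 i hi with ⟨k, k'⟩ | ⟨T', k, k'⟩ <;> simp_all
  · rw [h₁.1 i hi, h₂.1 i hi]

lemma all_ret (hs : SyncUpdate I P P₁) (hP : ∀ i, P i = .ret) (i : TID) : P₁ i = .ret := by
  by_cases hi : i ∈ I
  · rcases hs.2 i hi with ⟨-, h⟩ | ⟨T, h, -⟩
    exacts [h, absurd h (by simp [hP])]
  · rw [hs.1 i hi, hP]

lemma update [DecidableEq TID] (hs : SyncUpdate I P P₁) {i : TID} (hi : i ∉ I)
    (T : ThreadProg C Reg Addr TID) :
    SyncUpdate I (Function.update P i T) (Function.update P₁ i T) := by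
  refine ⟨fun j hj => ?_, fun j hj => ?_⟩
  · by_cases hji : j = i
    · subst hji; simp
    · simp [hji, hs.1 j hj]
  · have hji : j ≠ i := fun h => hi (h ▸ hj)
    simpa [hji] using hs.2 j hj

lemma diamond (hIJ : I ≠ J) (h₁ : SyncUpdate I P P₁) (h₂ : SyncUpdate J P P₂) :
    ∃ P₃, SyncUpdate J P₁ P₃ ∧ SyncUpdate I P₂ P₃ := by
  classical
  have hret : ∀ k ∈ I, k ∈ J → P k = .ret := fun k hI hJ => by
    rcases h₁.2 k hI with ⟨h, -⟩ | ⟨T, h, -⟩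
    · exact h
    · rcases h₂.2 k hJ with ⟨h', -⟩ | ⟨T', h', -⟩ <;> simp_all
  refine ⟨fun k => if k ∈ J then P₂ k else P₁ k, ⟨fun k hk => by simp [hk], fun k hk => ?_⟩,
    ⟨fun k hk => ?_, fun k hk => ?_⟩⟩ <;> grind [SyncUpdate]

end SyncUpdate

end Barriers

section Checked

variable {Val C Reg Addr TID : Type} [DecidableEq Reg] [DecidableEq Addr] [DecidableEq TID]
variable {op : Val → Val → Val} {κ : C → Val}

lemma cstep_schd_of_eq {X X' : MemEvs Addr TID} {c : Config Val C Reg Addr TID} {i : TID}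
    {Ri : Reg → Val} {Ti : ThreadProg C Reg Addr TID} {G' : Addr → Val} {R' : Reg → Val}
    {T' : ThreadProg C Reg Addr TID} (hR : c.R i = Ri) (hP : c.P i = Ti)
    (h : CTStep op κ i X c.G Ri Ti (.ok X' G' R' T')) :
    CStep op κ (.ok X c) (.ok X' ⟨G', Function.update c.R i R', Function.update c.P i T'⟩) := by
  subst hR hP
  exact .schd h

lemma eq_err_of_csteps_err {z : CConfig Val C Reg Addr TID} (h : CSteps op κ .err z) :
    z = .err := by
  induction h with
  | refl => rfl
  | tail _ hs ih => subst ih; cases hs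

lemma Doomed.cstep {i : TID} {X X' : MemEvs Addr TID} {c c' : Config Val C Reg Addr TID}
    (hd : Doomed i X (c.P i)) (h : CStep op κ (.ok X c) (.ok X' c')) : Doomed i X' (c'.P i) := by
  cases h with
  | @schd _ _ j _ _ _ _ hct =>
    have hji : j ≠ i := by
      rintro rfl
      exact hd.not_ctstep_ok hct
    simpa [Function.update_of_ne hji.symm] using hd.of_racesPersist (hct.racesPersist hji)
  | @sync _ _ I P' hout hin =>
    have hi : i ∉ I := SyncUpdate.not_mem ⟨hout, hin⟩ hd.ne_ret (hd.ne_sync I)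
    simpa [hout i hi] using hd.of_racesPersist (racesPersist_syncMem hi X)

lemma Doomed.csteps {i : TID} {X X' : MemEvs Addr TID} {c c' : Config Val C Reg Addr TID}
    (hd : Doomed i X (c.P i)) (h : CSteps op κ (.ok X c) (.ok X' c')) : Doomed i X' (c'.P i) := by
  generalize ht : CConfig.ok X' c' = t at h
  induction h generalizing X' c' with
  | refl => cases ht; exact hd
  | @tail b _ _ hs ih =>
    subst ht
    cases b with
    | err => cases hs
    | ok Xb cb => exact (ih rfl).cstep hs

lemma exists_doomed_of_cstep_err {X : MemEvs Addr TID} {c : Config Val C Reg Addr TID}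
    (h : CStep op κ (.ok X c) .err) : ∃ i, Doomed i X (c.P i) := by
  cases h with
  | schdBad h => exact ⟨_, ctstep_err_iff_doomed.mp h⟩

lemma cstep_diamond_schd_sync {X X₁ : MemEvs Addr TID} {c : Config Val C Reg Addr TID} {i : TID}
    {G₁ : Addr → Val} {R₁ : Reg → Val} {T₁ : ThreadProg C Reg Addr TID} {I : Set TID}
    {P' : TID → ThreadProg C Reg Addr TID}
    (hct : CTStep op κ i X c.G (c.R i) (c.P i) (.ok X₁ G₁ R₁ T₁)) (hs : SyncUpdate I c.P P') :
    ∃ d, CStep op κ (.ok X₁ ⟨G₁, Function.update c.R i R₁, Function.update c.P i T₁⟩) d ∧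
      CStep op κ (.ok (syncMem I X) ⟨c.G, c.R, P'⟩) d := by
  have hi : i ∉ I := hs.not_mem hct.ne_ret (hct.ne_sync I)
  have hs' := hs.update hi T₁
  exact ⟨_, .sync hs'.1 hs'.2, cstep_schd_of_eq rfl (hs.1 i hi) (hct.syncMem hi)⟩

lemma cstep_diamond {X Xa Xb : MemEvs Addr TID} {c ca cb : Config Val C Reg Addr TID}
    (ha : CStep op κ (.ok X c) (.ok Xa ca)) (hb : CStep op κ (.ok X c) (.ok Xb cb)) :
    (Xa = Xb ∧ ca = cb) ∨ (∃ i, Doomed i Xa (ca.P i)) ∨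
      ∃ d, CStep op κ (.ok Xa ca) d ∧ CStep op κ (.ok Xb cb) d := by
  cases ha with
  | @schd _ _ i _ _ _ _ h₁ =>
    cases hb with
    | @schd _ _ j _ _ _ _ h₂ =>
      by_cases hij : i = j
      · subst hij
        cases h₁.det h₂
        exact .inl ⟨rfl, rfl⟩
      rcases ctstep_diamond hij h₁ h₂ with hd | ⟨X₃, G₃, h₁₂, h₂₁⟩
      · exact .inr (.inl ⟨j, by simpa [Function.update_of_ne (Ne.symm hij)] using hd⟩)
      refine .inr (.inr ⟨_, cstep_schd_of_eq (by simp [Ne.symm hij]) (by simp [Ne.symm hij]) h₁₂,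
        ?_⟩)
      rw [Function.update_comm hij, Function.update_comm hij]
      exact cstep_schd_of_eq (by simp [hij]) (by simp [hij]) h₂₁
    | sync hout hin => exact .inr (.inr (cstep_diamond_schd_sync h₁ ⟨hout, hin⟩))
  | @sync _ _ I P₁ hout₁ hin₁ =>
    cases hb with
    | schd h₂ =>
      obtain ⟨d, hd₂, hd₁⟩ := cstep_diamond_schd_sync h₂ ⟨hout₁, hin₁⟩
      exact .inr (.inr ⟨d, hd₁, hd₂⟩)
    | @sync _ _ J P₂ hout₂ hin₂ =>
      by_cases hIJ : I = J
      · subst hIJ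
        exact .inl ⟨rfl, by rw [SyncUpdate.det ⟨hout₁, hin₁⟩ ⟨hout₂, hin₂⟩]⟩
      obtain ⟨P₃, h₁₃, h₂₃⟩ := SyncUpdate.diamond hIJ ⟨hout₁, hin₁⟩ ⟨hout₂, hin₂⟩
      refine .inr (.inr ⟨_, .sync h₁₃.1 h₁₃.2, ?_⟩)
      rw [syncMem_comm]
      exact .sync h₂₃.1 h₂₃.2

end Checked

section Termination

variable {Val C Reg Addr TID : Type} [DecidableEq Reg] [DecidableEq Addr] [DecidableEq TID]
variable {op : Val → Val → Val} {κ : C → Val}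

lemma CTerminates.of_cstep {X X' : MemEvs Addr TID} {c c' : Config Val C Reg Addr TID}
    {Gt : Addr → Val} {Rt : TID → Reg → Val} (h : CStep op κ (.ok X c) (.ok X' c'))
    (ht : CTerminates op κ X' c' Gt Rt) : CTerminates op κ X c Gt Rt :=
  let ⟨X'', P'', hrun, hret⟩ := ht
  ⟨X'', P'', .head h hrun, hret⟩

lemma CTerminates.not_doomed {X : MemEvs Addr TID} {c : Config Val C Reg Addr TID}
    {Gt : Addr → Val} {Rt : TID → Reg → Val} (ht : CTerminates op κ X c Gt Rt) (i : TID) :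
    ¬ Doomed i X (c.P i) := fun hd =>
  let ⟨_, _, hrun, hret⟩ := ht
  (hd.csteps hrun).ne_ret (hret i)

lemma CSteps.eq_of_all_ret {X X' : MemEvs Addr TID} {c c' : Config Val C Reg Addr TID}
    (h : CSteps op κ (.ok X c) (.ok X' c')) (hc : ∀ i, c.P i = .ret) :
    c'.G = c.G ∧ c'.R = c.R ∧ ∀ i, c'.P i = .ret := by
  generalize ht : CConfig.ok X' c' = t at h
  induction h generalizing X' c' with
  | refl => cases ht; exact ⟨rfl, rfl, hc⟩
  | @tail b _ _ hs ih =>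
    subst ht
    cases b with
    | err => cases hs
    | ok Xb cb =>
      obtain ⟨hG, hR, hret⟩ := ih rfl
      cases hs with
      | schd hct => exact absurd (hret _) hct.ne_ret
      | sync hout hin => exact ⟨hG, hR, SyncUpdate.all_ret ⟨hout, hin⟩ hret⟩

lemma CTerminates.eq_of_all_ret {X : MemEvs Addr TID} {c : Config Val C Reg Addr TID}
    {Gt : Addr → Val} {Rt : TID → Reg → Val} (ht : CTerminates op κ X c Gt Rt)
    (hc : ∀ i, c.P i = .ret) : c.G = Gt ∧ c.R = Rt :=
  let ⟨_, _, hrun, _⟩ := ht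
  let ⟨hG, hR, _⟩ := hrun.eq_of_all_ret hc
  ⟨hG.symm, hR.symm⟩

lemma CTerminates.cstep {X : MemEvs Addr TID} {c : Config Val C Reg Addr TID}
    {z : CConfig Val C Reg Addr TID} {Gt : Addr → Val} {Rt : TID → Reg → Val}
    (ht : CTerminates op κ X c Gt Rt) (hz : CStep op κ (.ok X c) z) :
    ∃ Y d, z = .ok Y d ∧ CTerminates op κ Y d Gt Rt := by
  obtain ⟨X', P', hrun, hret⟩ := ht
  generalize hs : CConfig.ok X c = s at hrun hz
  induction hrun using Relation.ReflTransGen.head_induction_on generalizing X c z with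
  | refl =>
    cases hs
    cases hz with
    | schd hct => exact absurd (hret _) hct.ne_ret
    | schdBad hct => exact absurd (hret _) hct.ne_ret
    | sync hout hin => exact ⟨_, _, rfl, _, _, .refl, SyncUpdate.all_ret ⟨hout, hin⟩ hret⟩
  | @head s a ha hrest ih =>
    subst hs
    cases a with
    | err => cases eq_err_of_csteps_err hrest
    | ok Xa ca =>
      have hta : CTerminates op κ Xa ca Gt Rt := ⟨X', P', hrest, hret⟩
      cases z with
      | err =>
        obtain ⟨i, hd⟩ := exists_doomed_of_cstep_err hz
        exact absurd hd ((hta.of_cstep ha).not_doomed i)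
      | ok Y d =>
        rcases cstep_diamond ha hz with ⟨rfl, rfl⟩ | ⟨i, hd⟩ | ⟨e, hae, hze⟩
        · exact ⟨_, _, rfl, hta⟩
        · exact absurd hd (hta.not_doomed i)
        · obtain ⟨Y', d', rfl, hte⟩ := ih rfl hae
          exact ⟨Y, d, rfl, hte.of_cstep hze⟩

lemma Step.cstep {c c' : Config Val C Reg Addr TID} (h : Step op κ c c') (X : MemEvs Addr TID) :
    (∃ X', CStep op κ (.ok X c) (.ok X' c')) ∨ CStep op κ (.ok X c) .err := by
  cases h with
  | schd hts => exact (hts.ctstep X).imp (fun ⟨X', h⟩ => ⟨X', .schd h⟩) .schdBad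
  | sync hout hin => exact .inl ⟨_, .sync hout hin⟩

lemma CTerminates.steps {X : MemEvs Addr TID} {c c' : Config Val C Reg Addr TID}
    {Gt : Addr → Val} {Rt : TID → Reg → Val} (ht : CTerminates op κ X c Gt Rt)
    (h : Steps op κ c c') : ∃ X', CTerminates op κ X' c' Gt Rt := by
  induction h using Relation.ReflTransGen.head_induction_on generalizing X with
  | refl => exact ⟨X, ht⟩
  | head hs _ ih =>
    rcases hs.cstep X with ⟨X₁, hs'⟩ | hs'
    · obtain ⟨_, _, he, ht₁⟩ := ht.cstep hs'
      cases he
      exact ih ht₁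
    · obtain ⟨_, _, he, _⟩ := ht.cstep hs'
      cases he

lemma Terminates.eq_of_cterminates {X : MemEvs Addr TID} {c : Config Val C Reg Addr TID}
    {Gt G' : Addr → Val} {Rt R' : TID → Reg → Val} (h : Terminates op κ c G' R')
    (ht : CTerminates op κ X c Gt Rt) : G' = Gt ∧ R' = Rt :=
  let ⟨_, hsteps, hret⟩ := h
  let ⟨_, ht'⟩ := ht.steps hsteps
  ht'.eq_of_all_ret hret

end Termination

section Map

variable {Val Val₂ C Reg Addr TID : Type} [DecidableEq Reg] [DecidableEq Addr] [DecidableEq TID]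
variable {op : Val → Val → Val} {κ : C → Val} {op₂ : Val₂ → Val₂ → Val₂} {κ₂ : C → Val₂}

def Config.map (φ : Val → Val₂) (c : Config Val C Reg Addr TID) : Config Val₂ C Reg Addr TID :=
  ⟨φ ∘ c.G, fun i => φ ∘ c.R i, c.P⟩

def CConfig.map (φ : Val → Val₂) : CConfig Val C Reg Addr TID → CConfig Val₂ C Reg Addr TID
  | .ok X c => .ok X (c.map φ)
  | .err => .err

def CTRes.map (φ : Val → Val₂) : CTRes Val C Reg Addr TID → CTRes Val₂ C Reg Addr TID
  | .ok X G R T => .ok X (φ ∘ G) (φ ∘ R) T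
  | .err => .err

lemma CTStep.map {φ : Val → Val₂} (hop : ∀ a b, φ (op a b) = op₂ (φ a) (φ b))
    (hκ : ∀ k, φ (κ k) = κ₂ k) {i : TID} {X : MemEvs Addr TID} {G : Addr → Val}
    {R : Reg → Val} {T : ThreadProg C Reg Addr TID} {z : CTRes Val C Reg Addr TID}
    (h : CTStep op κ i X G R T z) : CTStep op₂ κ₂ i X (φ ∘ G) (φ ∘ R) T (z.map φ) := by
  cases h <;> simp only [CTRes.map, Function.comp_update, hop, hκ] <;> constructor <;> assumption

lemma CStep.map {φ : Val → Val₂} (hop : ∀ a b, φ (op a b) = op₂ (φ a) (φ b))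
    (hκ : ∀ k, φ (κ k) = κ₂ k) {s t : CConfig Val C Reg Addr TID} (h : CStep op κ s t) :
    CStep op₂ κ₂ (s.map φ) (t.map φ) := by
  cases h with
  | @schd _ c i _ _ R' _ hct =>
    have hR : (fun j => φ ∘ Function.update c.R i R' j) = Function.update (c.map φ).R i (φ ∘ R') :=
      funext fun j => Function.apply_update (fun _ => (φ ∘ ·)) c.R i R' j
    simp only [CConfig.map, Config.map, hR]
    exact .schd (hct.map hop hκ)
  | schdBad hct => exact .schdBad (hct.map hop hκ)
  | sync hout hin => exact .sync hout hin

lemma CTerminates.map {φ : Val → Val₂} (hop : ∀ a b, φ (op a b) = op₂ (φ a) (φ b))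
    (hκ : ∀ k, φ (κ k) = κ₂ k) {X : MemEvs Addr TID} {c : Config Val C Reg Addr TID}
    {Gt : Addr → Val} {Rt : TID → Reg → Val} (ht : CTerminates op κ X c Gt Rt) :
    CTerminates op₂ κ₂ X (c.map φ) (φ ∘ Gt) (fun i => φ ∘ Rt i) :=
  let ⟨X', P', hrun, hret⟩ := ht
  ⟨X', P', hrun.lift (CConfig.map φ) fun _ _ h => h.map hop hκ, hret⟩

end Map

/-- **Soundness of Equivalence Checking**: for all programs `P, Q`, symbolic
contexts `G, R` over `𝕍`, and maps `φ : (𝕍, ⊕) → (ℝ, ⊕)`, if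
`(X_∅, G, R, P) ↪↓ (G_P, R_P)`, `(X_∅, G, R, Q) ↪↓ (G_Q, R_Q)`, the symbolic
outputs are equal, `(φ(G), φ(R), P) ↓ (G_P', R_P')`, and
`(φ(G), φ(R), Q) ↓ (G_Q', R_Q')`, then `G_P' = G_Q'` and `R_P' = R_Q'`. -/
theorem soundness_of_equivalence_checking
    {V C Reg Addr TID : Type} [DecidableEq Reg] [DecidableEq Addr] [DecidableEq TID]
    (opV : V → V → V) (κV : C → V) (opR : ℝ → ℝ → ℝ) (κR : C → ℝ)
    (t₀ : TID)
    (G : Addr → V) (R : TID → Reg → V)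
    (P Q : TID → ThreadProg C Reg Addr TID)
    (φ : V → ℝ)
    (hop : ∀ v₁ v₂ : V, φ (opV v₁ v₂) = opR (φ v₁) (φ v₂))
    (hκ : ∀ c : C, φ (κV c) = κR c)
    (G_P G_Q : Addr → V) (R_P R_Q : TID → Reg → V)
    (G_P' G_Q' : Addr → ℝ) (R_P' R_Q' : TID → Reg → ℝ)
    (hP : CTerminates opV κV (emptyMemEvs t₀) ⟨G, R, P⟩ G_P R_P)
    (hQ : CTerminates opV κV (emptyMemEvs t₀) ⟨G, R, Q⟩ G_Q R_Q)
    (heqG : G_P = G_Q) (heqR : R_P = R_Q)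
    (hP' : Terminates opR κR ⟨fun g => φ (G g), fun i r => φ (R i r), P⟩ G_P' R_P')
    (hQ' : Terminates opR κR ⟨fun g => φ (G g), fun i r => φ (R i r), Q⟩ G_Q' R_Q') :
    G_P' = G_Q' ∧ R_P' = R_Q' := by
  obtain ⟨rfl, rfl⟩ := hP'.eq_of_cterminates (hP.map hop hκ)
  obtain ⟨rfl, rfl⟩ := hQ'.eq_of_cterminates (hQ.map hop hκ)
  subst heqG heqR
  exact ⟨rfl, rfl⟩

end Volta
end
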